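/- arXiv:math/0007164 — 2 statements merged into one kernel-verified Lean document; each statement's English description precedes it below -/
import Mathlib

section
/- Let G be a finite group and H, K subgroups. The number of double cosets K\G/H equals (|G|/(|K||H|)) · Σ over pairs (k, h) ∈ K × H with k conjugate to h of 1/c(k), where c(k) is the size of the conjugacy class of k in G. -/
/-!
Burnside's lemma for `K × H` acting on `G` by `(k, h) • g = k * g * h⁻¹`, whose orbits are the
double cosets. The pair `(k, h)` fixes `g` iff `g⁻¹ * k * g = h`; when `k` and `h` are conjugate
these `g` form a coset of the centralizer of `k`, so there are `|G| / c(k)` of them, and otherwise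
there are none.
-/

open scoped Classical

open MulAction

theorem MulAction.card_orbitRel_quotient_eq_sum_card_fixedBy_div {α β F : Type*} [Group α]
    [MulAction α β] [Fintype α] [Finite β] [Field F] [CharZero F] :
    (Nat.card (orbitRel.Quotient α β) : F)
      = (∑ a : α, (Nat.card (fixedBy β a) : F)) / Nat.card α := by
  have := Fintype.ofFinite β
  rw [eq_div_iff (Nat.cast_ne_zero.mpr Nat.card_pos.ne')]
  simp only [Nat.card_eq_fintype_card]
  exact_mod_cast (sum_card_fixedBy_eq_card_orbits_mul_card_group α β).symm

namespace DoubleCoset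

variable {G : Type*} [Group G]

instance prodMulAction (H K : Subgroup G) : MulAction (H × K) G where
  smul p g := p.1 * g * (p.2 : G)⁻¹
  one_smul g := show ((1 : H) : G) * g * ((1 : K) : G)⁻¹ = g by simp
  mul_smul p q g := show ((p.1 * q.1 : H) : G) * g * ((p.2 * q.2 : K) : G)⁻¹
      = p.1 * (q.1 * g * (q.2 : G)⁻¹) * (p.2 : G)⁻¹ by push_cast; group

theorem prod_smul_def {H K : Subgroup G} (p : H × K) (g : G) :
    p • g = p.1 * g * (p.2 : G)⁻¹ :=
  rfl

theorem setoid_iff_orbitRel {H K : Subgroup G} {x y : G} :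
    setoid (H : Set G) K x y ↔ orbitRel (H × K) G x y := by
  rw [rel_iff, orbitRel_apply, mem_orbit_iff]
  constructor
  · rintro ⟨a, ha, b, hb, rfl⟩
    exact ⟨(⟨a, ha⟩⁻¹, ⟨b, hb⟩), by rw [prod_smul_def]; simp [mul_assoc]⟩
  · rintro ⟨p, rfl⟩
    exact ⟨(p.1 : G)⁻¹, inv_mem p.1.2, p.2, p.2.2, by rw [prod_smul_def]; group⟩

def quotientEquivOrbitRelQuotient (H K : Subgroup G) :
    Quotient (H : Set G) K ≃ orbitRel.Quotient (H × K) G :=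
  Quotient.congrRight fun _ _ => setoid_iff_orbitRel

theorem mem_fixedBy_prod_iff {H K : Subgroup G} {p : H × K} {g : G} :
    g ∈ fixedBy G p ↔ g⁻¹ * p.1 * g = p.2 := by
  rw [mem_fixedBy, prod_smul_def, mul_inv_eq_iff_eq_mul, mul_assoc, inv_mul_eq_iff_eq_mul]

theorem card_fixedBy_prod {H K : Subgroup G} (p : H × K) :
    Nat.card (fixedBy G p) = Nat.card {g : G // g⁻¹ * p.1 * g = p.2} :=
  Nat.card_congr (Equiv.subtypeEquivRight fun _ => mem_fixedBy_prod_iff)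

end DoubleCoset

section Conjugators

variable {G : Type*} [Group G]

def conjugatorsEquivCentralizer (a c : G) :
    {g : G // g⁻¹ * a * g = c⁻¹ * a * c} ≃ Subgroup.centralizer {a} :=
  (Equiv.mulRight c⁻¹).subtypeEquiv fun g => by
    rw [Subgroup.mem_centralizer_singleton_iff, Equiv.coe_mulRight]
    dsimp only
    constructor <;> intro h
    · calc g * c⁻¹ * a = g * (c⁻¹ * a * c) * c⁻¹ := by group
        _ = a * (g * c⁻¹) := by rw [← h]; group
    · calc g⁻¹ * a * g = c⁻¹ * (g * c⁻¹)⁻¹ * (a * (g * c⁻¹)) * c := by group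
        _ = c⁻¹ * a * c := by rw [← h]; group

theorem card_conjugators_mul_card_conjClass {a b : G} (hab : IsConj a b) :
    Nat.card {g : G // g⁻¹ * a * g = b} * Nat.card {c : G // IsConj a c} = Nat.card G := by
  obtain ⟨c, rfl⟩ : ∃ c : G, c⁻¹ * a * c = b := by
    obtain ⟨c, hc⟩ := isConj_iff.mp hab
    exact ⟨c⁻¹, by rw [inv_inv, hc]⟩
  have hclass : {c : G // IsConj a c} ≃ orbit (ConjAct G) a :=
    Equiv.subtypeEquivRight fun _ => by rw [ConjAct.mem_orbit_conjAct, isConj_comm]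
  rw [Nat.card_congr (conjugatorsEquivCentralizer a c), Nat.card_congr hclass,
    Subgroup.nat_card_centralizer_nat_card_stabilizer, mul_comm, ← Nat.card_prod,
    Nat.card_congr (orbitProdStabilizerEquivGroup (ConjAct G) a)]
  exact Nat.card_congr ConjAct.toConjAct.toEquiv.symm

theorem card_conjugators_eq_zero {a b : G} (hab : ¬IsConj a b) :
    Nat.card {g : G // g⁻¹ * a * g = b} = 0 := by
  have : IsEmpty {g : G // g⁻¹ * a * g = b} :=
    ⟨fun ⟨g, hg⟩ => hab (isConj_iff.mpr ⟨g⁻¹, by rwa [inv_inv]⟩)⟩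
  exact Nat.card_of_isEmpty

theorem card_conjugators_div_card [Finite G] {F : Type*} [Field F] [CharZero F] (a b : G)
    [Decidable (IsConj a b)] :
    (Nat.card {g : G // g⁻¹ * a * g = b} : F) / Nat.card G
      = if IsConj a b then ((Nat.card {c : G // IsConj a c} : F))⁻¹ else 0 := by
  split_ifs with hab
  · have hmul := card_conjugators_mul_card_conjClass hab
    have hconj : Nat.card {g : G // g⁻¹ * a * g = b} ≠ 0 :=
      left_ne_zero_of_mul (hmul ▸ Nat.card_pos.ne')
    rw [← hmul, Nat.cast_mul, div_mul_cancel_left₀ (Nat.cast_ne_zero.mpr hconj)]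
  · rw [card_conjugators_eq_zero hab, Nat.cast_zero, zero_div]

end Conjugators

/-- The number of double cosets `K\G/H` equals
`(|G|/(|K||H|)) ⬝ Σ_{(k,h) ∈ K × H, k ∼ h} 1/c(k)`, where `c(k)` is the size of
the conjugacy class of `k` in `G`. -/
theorem card_doset_quotient_eq_conjugate_pair_sum
    {G : Type} [Group G] [Fintype G] (H K : Subgroup G) :
    (Nat.card (DoubleCoset.Quotient (K : Set G) (H : Set G)) : ℚ)
      = (Fintype.card G : ℚ) / ((Nat.card K : ℚ) * (Nat.card H : ℚ)) *
          ∑ k : K, ∑ h : H,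
            if IsConj (k : G) (h : G) then
              ((Nat.card {b : G // IsConj (k : G) b} : ℚ))⁻¹
            else 0 := by
  calc (Nat.card (DoubleCoset.Quotient (K : Set G) (H : Set G)) : ℚ)
      = Nat.card (orbitRel.Quotient (K × H) G) :=
        congrArg _ (Nat.card_congr (DoubleCoset.quotientEquivOrbitRelQuotient K H))
    _ = (∑ p : K × H, (Nat.card (fixedBy G p) : ℚ)) / Nat.card (K × H) :=
        card_orbitRel_quotient_eq_sum_card_fixedBy_div
    _ = _ := by
        simp_rw [DoubleCoset.card_fixedBy_prod, Fintype.sum_prod_type,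
          ← card_conjugators_div_card (F := ℚ), ← Finset.sum_div, Nat.card_prod, Nat.cast_mul,
          Nat.card_eq_fintype_card (α := G)]
        field_simp
end

section
/- Let G be a finite group all of whose complex characters are rational-valued. Let H₁, …, H_N be representatives of the conjugacy classes of cyclic subgroups of G (one for each conjugacy class of elements, with H_i generated by a representative element), and ρ₁, …, ρ_N the irreducible complex representations of G. Then the N × N matrix M with entries M_{ij} = dim ρ_j^{H_i} is invertible. -/
/-!
Averaging characters over `Hᵢ = ⟨hᵢ⟩` gives
`dim ρⱼ^{Hᵢ} = Σₖ Cᵢₖ χⱼ(hₖ)`, where `Cᵢₖ` is the proportion of elements of `Hᵢ` conjugate to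
`hₖ`; so the matrix is `C X` with `X` the character table, which is invertible by the
orthogonality relations. A conjugate of `hₖ` in `Hᵢ` has order dividing that of `hᵢ`, and if the
orders agree it is a generator `hᵢ ^ m` with `m` prime to the order. Rationality forces
`χ(g ^ m) = χ(g)`: `χ(g)` and `χ(g ^ m)` are the sums of the eigenvalues `ζ ^ aᵤ` of `ρ(g)`
(counted with multiplicity) and of their `m`-th powers, and `ζ ↦ ζ ^ m` preserves every rational
relation among powers of `ζ` because `ζ ^ m` is again a root of the minimal polynomial `Φₙ` of `ζ`. Since `X` is invertible the characters separate the classes, so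
`hᵢ ^ m` is conjugate to `hᵢ` and `k = i`. Hence `C` is triangular with respect to the order of
`hᵢ`, with nonzero diagonal.
-/

open Finset Polynomial Module LinearMap Subgroup

theorem IsPrimitiveRoot.sum_pow_eq_of_sum_eq_ratCast {K : Type*} [Field K] [CharZero K]
    {n : ℕ} {ζ : K} (hζ : IsPrimitiveRoot ζ n) {s : Finset K} (hs : ∀ μ ∈ s, μ ^ n = 1)
    (c : K → ℚ) {q : ℚ} (hq : ∑ μ ∈ s, (c μ : K) * μ = q) {m : ℕ} (hm : m.Coprime n) :
    ∑ μ ∈ s, (c μ : K) * μ ^ m = q := by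
  rcases n.eq_zero_or_pos with rfl | hn
  · simp [(Nat.coprime_zero_right _).mp hm, hq]
  have : NeZero n := ⟨hn.ne'⟩
  choose! a ha using fun μ hμ => hζ.eq_pow_of_pow_eq_one (hs μ hμ)
  set p : ℚ[X] := ∑ μ ∈ s, C (c μ) * X ^ a μ - C q
  have hp : ∀ x : K, aeval x p = 0 ↔ ∑ μ ∈ s, (c μ : K) * x ^ a μ = q := by
    intro x
    simp [p, sub_eq_zero]
  have hdvd : cyclotomic n ℚ ∣ p := by
    rw [cyclotomic_eq_minpoly_rat hζ hn]
    refine minpoly.dvd ℚ ζ ((hp ζ).mpr ?_)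
    rw [← hq]
    exact sum_congr rfl fun μ hμ => by rw [(ha μ hμ).2]
  have hroot : aeval (ζ ^ m) (cyclotomic n ℚ) = 0 := by
    rw [aeval_def, eval₂_eq_eval_map, map_cyclotomic]
    exact (hζ.pow_of_coprime m hm).isRoot_cyclotomic hn
  obtain ⟨r, hr⟩ := hdvd
  rw [← (hp (ζ ^ m)).mp (by rw [hr, map_mul, hroot, zero_mul])]
  exact sum_congr rfl fun μ hμ => by rw [← pow_mul, mul_comm m, pow_mul, (ha μ hμ).2]

namespace Module.End

variable {K V : Type*} [Field K] [AddCommGroup V] [Module K V]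

theorem HasEigenvalue.pow_eq_one {f : End K V} {μ : K} (hμ : f.HasEigenvalue μ) {n : ℕ}
    (hf : f ^ n = 1) : μ ^ n = 1 := by
  obtain ⟨v, hv⟩ := hμ.exists_hasEigenvector
  refine smul_left_injective K hv.2 ?_
  simpa [hf] using (hv.pow_apply n).symm

variable [FiniteDimensional K V]

theorem trace_restrict_pow_maxGenEigenspace (f : End K V) (μ : K) (k : ℕ) :
    trace K (f.maxGenEigenspace μ)
      ((f ^ k).restrict (f.mapsTo_maxGenEigenspace_of_comm (Commute.self_pow f k) μ)) =
      finrank K (f.maxGenEigenspace μ) * μ ^ k := by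
  set g := f.restrict (f.mapsTo_maxGenEigenspace_of_comm (Commute.refl f) μ)
  have hnil : IsNilpotent (g - algebraMap K _ μ) := by
    convert f.isNilpotent_restrict_maxGenEigenspace_sub_algebraMap μ using 1
    ext; simp [g, Algebra.algebraMap_eq_smul_one]; rfl
  rw [← pow_restrict k (f.mapsTo_maxGenEigenspace_of_comm (Commute.refl f) μ)]
  induction k with
  | zero => simp
  | succ k ih =>
    rw [pow_succ, mul_eq_comp,
      trace_comp_eq_mul_of_commute_of_isNilpotent μ (Commute.self_pow g k).symm hnil, ih]
    ring

theorem exists_trace_pow_eq_sum [IsAlgClosed K] (f : End K V) :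
    ∃ s : Finset K, (∀ μ ∈ s, f.HasEigenvalue μ) ∧
      ∀ k : ℕ, trace K V (f ^ k) = ∑ μ ∈ s, finrank K (f.maxGenEigenspace μ) * μ ^ k := by
  classical
  have hfin : {μ | f.maxGenEigenspace μ ≠ ⊥}.Finite :=
    WellFoundedGT.finite_ne_bot_of_iSupIndep f.independent_maxGenEigenspace
  have hint := DirectSum.isInternal_submodule_of_iSupIndep_of_iSup_eq_top
    f.independent_maxGenEigenspace f.iSup_maxGenEigenspace_eq_top
  refine ⟨hfin.toFinset, fun μ hμ => HasUnifEigenvalue.lt zero_lt_one (hfin.mem_toFinset.mp hμ),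
    fun k => ?_⟩
  rw [trace_eq_sum_trace_restrict' hint hfin
    (fun μ => f.mapsTo_maxGenEigenspace_of_comm (Commute.self_pow f k) μ)]
  exact sum_congr rfl fun μ _ => trace_restrict_pow_maxGenEigenspace f μ k

theorem trace_pow_eq_of_coprime [IsAlgClosed K] [CharZero K] (f : End K V) {n : ℕ}
    (hf : f ^ n = 1) {q : ℚ} (hq : trace K V f = q) {m : ℕ} (hm : m.Coprime n) :
    trace K V (f ^ m) = trace K V f := by
  rcases n.eq_zero_or_pos with rfl | hn
  · rw [(Nat.coprime_zero_right _).mp hm, pow_one]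
  have : NeZero n := ⟨hn.ne'⟩
  obtain ⟨ζ, hζ⟩ := HasEnoughRootsOfUnity.exists_primitiveRoot K n
  obtain ⟨s, hs, htr⟩ := f.exists_trace_pow_eq_sum
  have key := hζ.sum_pow_eq_of_sum_eq_ratCast (fun μ hμ => (hs μ hμ).pow_eq_one hf)
    (fun μ => (finrank K (f.maxGenEigenspace μ) : ℚ)) (q := q)
    (by simpa [hq] using (htr 1).symm) hm
  simp only [Rat.cast_natCast] at key
  rw [htr, key, hq]

end Module.End

theorem IsOfFinOrder.exists_coprime_pow_eq {G : Type*} [Group G] {g x : G} (hg : IsOfFinOrder g)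
    (hx : x ∈ zpowers g) (hord : orderOf x = orderOf g) :
    ∃ m : ℕ, m.Coprime (orderOf g) ∧ g ^ m = x := by
  obtain ⟨m, rfl⟩ := hg.mem_powers_iff_mem_zpowers.mpr hx
  refine ⟨m, ?_, rfl⟩
  rw [hg.orderOf_pow, Nat.div_eq_self] at hord
  exact Nat.coprime_comm.mp (hord.resolve_left hg.orderOf_pos.ne')

theorem Matrix.det_ne_zero_of_offDiagonal_lt {m R α : Type*} [Fintype m] [DecidableEq m]
    [CommRing R] [IsDomain R] [LinearOrder α] {M : Matrix m m R} (b : m → α)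
    (hlt : ∀ i j, i ≠ j → M i j ≠ 0 → b j < b i) (hdiag : ∀ i, M i i ≠ 0) : M.det ≠ 0 := by
  have htri : M.BlockTriangular (OrderDual.toDual ∘ b) := fun i j hij => by
    by_contra hne
    exact (hlt i j (by rintro rfl; exact lt_irrefl _ hij) hne).not_gt hij
  have hblock : ∀ a, M.toSquareBlock (OrderDual.toDual ∘ b) a = diagonal fun i => M i.1 i.1 := by
    intro a
    ext ⟨i, hi⟩ ⟨j, hj⟩
    by_cases hij : i = j
    · subst hij; simp [toSquareBlock_def]
    · rw [diagonal_apply_ne _ (by simpa using hij)]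
      by_contra hne
      exact (hlt i j hij hne).ne (by simpa using hj.trans hi.symm)
  rw [htri.det]
  exact prod_ne_zero_iff.mpr fun a _ => by
    rw [hblock, det_diagonal]
    exact prod_ne_zero_iff.mpr fun i _ => hdiag i

namespace FDRep

open CategoryTheory

variable {k G : Type*} [Field k]

theorem char_eq_of_isConj [Group G] (V : FDRep k G) {g g' : G} (hg : IsConj g g') :
    V.character g = V.character g' := by
  obtain ⟨c, rfl⟩ := isConj_iff.mp hg
  exact (char_conj V g c).symm

theorem char_pow_eq_of_coprime [IsAlgClosed k] [CharZero k] [Monoid G] (V : FDRep k G) {g : G}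
    {q : ℚ} (hq : V.character g = q) {m : ℕ} (hm : m.Coprime (orderOf g)) :
    V.character (g ^ m) = V.character g := by
  have hpow : V.ρ g ^ orderOf g = 1 := by rw [← map_pow, pow_orderOf_eq_one, map_one]
  simpa only [character, map_pow] using End.trace_pow_eq_of_coprime (V.ρ g) hpow hq hm

theorem char_eq_of_mem_zpowers_of_orderOf_eq [IsAlgClosed k] [CharZero k] [Group G]
    (V : FDRep k G) {g x : G} {q : ℚ} (hq : V.character g = q) (hg : IsOfFinOrder g)
    (hx : x ∈ zpowers g) (hord : orderOf x = orderOf g) :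
    V.character x = V.character g := by
  obtain ⟨m, hm, rfl⟩ := hg.exists_coprime_pow_eq hx hord
  exact V.char_pow_eq_of_coprime hq hm

theorem linearIndependent_character [IsAlgClosed k] [Group G] [Fintype G]
    [Invertible (Nat.card G : k)] {ι : Type*} (ρ : ι → FDRep k G) (hirr : ∀ i, Simple (ρ i))
    (hdist : ∀ i j, Nonempty (ρ i ≅ ρ j) → i = j) :
    LinearIndependent k fun i => (ρ i).character := by
  classical
  have horth : ∀ i j, (Nat.card G : k)⁻¹ * ∑ g : G, (ρ j).character g * (ρ i).character g⁻¹
      = if j = i then 1 else 0 := by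
    intro i j
    have := hirr i
    have := hirr j
    rw [char_orthonormal]
    by_cases hji : j = i
    · subst hji; simp [Nonempty.intro (Iso.refl (ρ j))]
    · simpa [hji] using ⟨fun e => hji (hdist j i ⟨e⟩)⟩
  rw [linearIndependent_iff']
  intro s c hsum i hi
  calc c i = ∑ j ∈ s, c j * ((Nat.card G : k)⁻¹ *
        ∑ g : G, (ρ j).character g * (ρ i).character g⁻¹) := by
          simp only [horth, mul_ite, mul_one, mul_zero, sum_ite_eq', if_pos hi]
    _ = (Nat.card G : k)⁻¹ * ∑ g : G, (∑ j ∈ s, c j • (ρ j).character) g *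
        (ρ i).character g⁻¹ := by
      simp only [Finset.sum_apply, Pi.smul_apply, smul_eq_mul, mul_sum, sum_mul]
      rw [sum_comm]
      exact sum_congr rfl fun _ _ => sum_congr rfl fun _ _ => by ring
    _ = 0 := by simp only [hsum, Pi.zero_apply, zero_mul, sum_const_zero, mul_zero]

theorem isUnit_charTable_of_linearIndependent [Group G] {ι : Type*} [Fintype ι] [DecidableEq ι]
    (ρ : ι → FDRep k G) (hlin : LinearIndependent k fun j => (ρ j).character) (h : ι → G)
    (hsurj : ∀ g : G, ∃ i, IsConj g (h i)) :
    IsUnit (Matrix.of fun i j => (ρ j).character (h i)) := by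
  rw [← Matrix.linearIndependent_cols_iff_isUnit, Fintype.linearIndependent_iff]
  intro c hc j
  refine Fintype.linearIndependent_iff.mp hlin c (funext fun g => ?_) j
  obtain ⟨i, hi⟩ := hsurj g
  simpa [char_eq_of_isConj _ hi] using congrFun hc i

theorem sum_char_eq_sum_card_mul [Group G] {ι : Type*} [Fintype ι] [DecidableEq ι]
    (V : FDRep k G) {h : ι → G} {cl : G → ι} (hcl : ∀ g, IsConj g (h (cl g)))
    (H : Subgroup G) [Fintype H] :
    ∑ x : H, V.character x = ∑ i, (#{x : H | cl x = i} : k) * V.character (h i) := by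
  rw [← sum_fiberwise univ (fun x : H => cl x)]
  refine sum_congr rfl fun i _ => ?_
  rw [sum_congr rfl fun x hx => (mem_filter.mp hx).2 ▸ V.char_eq_of_isConj (hcl x),
    sum_const, nsmul_eq_mul]

end FDRep

section

variable {G : Type*} [Group G] [Fintype G] {ι : Type*} {h : ι → G}

theorem orderOf_lt_of_isConj_mem_zpowers {ρ : ι → FDRep ℂ G}
    (hrat : ∀ j g, ∃ q : ℚ, (ρ j).character g = q)
    (hsep : Function.Injective fun i j => (ρ j).character (h i)) {i k : ι} (hik : i ≠ k)
    {x : G} (hx : x ∈ zpowers (h i)) (hxk : IsConj x (h k)) : orderOf (h k) < orderOf (h i) := by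
  obtain ⟨c, hc⟩ := hxk
  rw [← hc.orderOf_eq]
  refine (Nat.le_of_dvd (orderOf_pos _) (orderOf_dvd_of_mem_zpowers hx)).lt_of_ne fun hord => ?_
  refine hik (hsep (funext fun j => ?_))
  obtain ⟨q, hq⟩ := hrat j (h i)
  change (ρ j).character (h i) = (ρ j).character (h k)
  rw [← FDRep.char_eq_of_mem_zpowers_of_orderOf_eq _ hq (isOfFinOrder_of_finite _) hx hord]
  exact (ρ j).char_eq_of_isConj ⟨c, hc⟩

variable [Fintype ι] [DecidableEq ι] {cl : G → ι}

open scoped Classical in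
noncomputable def zpowersClassMatrix (h : ι → G) (cl : G → ι) : Matrix ι ι ℂ :=
  Matrix.of fun i k => (#{x : zpowers (h i) | cl x = k} : ℂ) / Nat.card (zpowers (h i))

theorem mapMatrix_finrank_invariants_zpowers_eq (ρ : ι → FDRep ℂ G)
    (hcl : ∀ g, IsConj g (h (cl g))) :
    (Rat.castHom ℂ).mapMatrix (Matrix.of fun i j =>
      (finrank ℂ (Representation.invariants ((ρ j).ρ.comp (zpowers (h i)).subtype)) : ℚ)) =
      zpowersClassMatrix h cl * Matrix.of fun i j => (ρ j).character (h i) := by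
  classical
  ext i j
  have : Invertible (Nat.card (zpowers (h i)) : ℂ) := invertibleOfNonzero (by simp)
  simp only [RingHom.mapMatrix_apply, Matrix.map_apply, Matrix.of_apply, Rat.coe_castHom,
    Rat.cast_natCast, Matrix.mul_apply, zpowersClassMatrix]
  rw [← Representation.card_inv_mul_sum_char_eq_finrank]
  refine (congrArg _ ((ρ j).sum_char_eq_sum_card_mul hcl (zpowers (h i)))).trans ?_
  simp only [mul_sum, div_eq_inv_mul, mul_assoc]

theorem det_zpowersClassMatrix_ne_zero {ρ : ι → FDRep ℂ G}
    (hrat : ∀ j g, ∃ q : ℚ, (ρ j).character g = q)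
    (hsep : Function.Injective fun i j => (ρ j).character (h i))
    (hrep : ∀ i j, IsConj (h i) (h j) → i = j) (hcl : ∀ g, IsConj g (h (cl g))) :
    (zpowersClassMatrix h cl).det ≠ 0 := by
  classical
  refine Matrix.det_ne_zero_of_offDiagonal_lt (fun i => orderOf (h i)) (fun i k hik hC => ?_)
    fun i => ?_
  · have hne : #{x : zpowers (h i) | cl x = k} ≠ 0 := fun h0 =>
      hC (by simp [zpowersClassMatrix, h0])
    obtain ⟨x, hx⟩ := card_ne_zero.mp hne
    exact orderOf_lt_of_isConj_mem_zpowers hrat hsep hik x.2 ((mem_filter.mp hx).2 ▸ hcl x)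
  · have hmem : (⟨h i, mem_zpowers _⟩ : zpowers (h i)) ∈
        ({x : zpowers (h i) | cl x = i} : Finset _) := by
      simpa using (hrep i _ (hcl (h i))).symm
    simpa [zpowersClassMatrix] using card_ne_zero_of_mem hmem

end

theorem matrix_finrank_invariants_isUnit_general
    {G : Type} [Group G] [Fintype G]
    {ι : Type} [Fintype ι] [DecidableEq ι] (ρ : ι → FDRep ℂ G)
    (hirr : ∀ i, CategoryTheory.Simple (ρ i))
    (hdist : ∀ i j, Nonempty (ρ i ≅ ρ j) → i = j)
    (hrat : ∀ (V : FDRep ℂ G) (g : G), ∃ q : ℚ, V.character g = (q : ℂ))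
    (h : ι → G)
    (hrep : ∀ i j, IsConj (h i) (h j) → i = j)
    (hsurj : ∀ g : G, ∃ i, IsConj g (h i)) :
    IsUnit (Matrix.of fun i j : ι =>
      (Module.finrank ℂ (Representation.invariants
        ((ρ j).ρ.comp (Subgroup.zpowers (h i)).subtype)) : ℚ)) := by
  choose cl hcl using hsurj
  have hX := FDRep.isUnit_charTable_of_linearIndependent ρ
    (FDRep.linearIndependent_character ρ hirr hdist) h fun g => ⟨cl g, hcl g⟩
  have hsep := (Matrix.linearIndependent_rows_iff_isUnit.mpr hX).injective
  rw [Matrix.isUnit_iff_isUnit_det, isUnit_iff_ne_zero, ← map_ne_zero (Rat.castHom ℂ),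
    RingHom.map_det, mapMatrix_finrank_invariants_zpowers_eq ρ hcl, Matrix.det_mul]
  exact mul_ne_zero (det_zpowersClassMatrix_ne_zero (hrat <| ρ ·) hsep hrep hcl)
    ((Matrix.isUnit_iff_isUnit_det _).mp hX).ne_zero

/-- Let `G` be a finite group all of whose complex characters are rational-valued,
`h i` representatives of the conjugacy classes of `G` (whose generated cyclic
subgroups `Hᵢ = ⟨h i⟩` then represent the conjugacy classes of cyclic subgroups),
and `ρ j` the irreducible complex representations.  Then the matrix
`M i j = dim ρⱼ^{Hᵢ}` is invertible. -/
theorem matrix_finrank_invariants_isUnit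
    {G : Type} [Group G] [Fintype G]
    {ι : Type} [Fintype ι] [DecidableEq ι] (ρ : ι → FDRep ℂ G)
    (hirr : ∀ i, CategoryTheory.Simple (ρ i))
    (hdist : ∀ i j, Nonempty (ρ i ≅ ρ j) → i = j)
    (hcomplete : ∀ V : FDRep ℂ G, CategoryTheory.Simple V → ∃ i, Nonempty (ρ i ≅ V))
    (hrat : ∀ (V : FDRep ℂ G) (g : G), ∃ q : ℚ, V.character g = (q : ℂ))
    (h : ι → G)
    (hrep : ∀ i j, IsConj (h i) (h j) → i = j)
    (hsurj : ∀ g : G, ∃ i, IsConj g (h i)) :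
    IsUnit (Matrix.of fun i j : ι =>
      (Module.finrank ℂ (Representation.invariants
        ((ρ j).ρ.comp (Subgroup.zpowers (h i)).subtype)) : ℚ)) :=
  matrix_finrank_invariants_isUnit_general ρ hirr hdist hrat h hrep hsurj
end
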